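/- arXiv:2211.08004 — 6 statements merged into one kernel-verified Lean document; each statement's English description precedes it below -/
import Mathlib

section
/- For every σ > 0, the sequence k ↦ Υ_k(σ) := s_{2k+2}/((2k+1)·s_{2k}) − σ is strictly decreasing in k. -/
/-!
Write `M n = ∫₀^{2π} sinⁿ x · e^{c cos 2x} dx` with `c = -1/σ < 0`. Differentiating
`sin^{m+1} x · cos x · e^{c cos 2x}` and integrating over a period gives the recurrence
`(m+1) M m - (m+2) M (m+2) = 4c (M (m+2) - M (m+4))`. Since `sin² ≤ 1` the even moments
decrease strictly, so the right-hand side is negative and `(2k+1) M (2k) < (2k+2) M (2k+2)`.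
Together with `M (2k+4) < M (2k+2)` this gives
`M (2k+4) · (2k+1) M (2k) < (2k+3) M (2k+2)²`, which is the claimed monotonicity.
-/

open Real MeasureTheory intervalIntegral

section Weighted

variable {w : ℝ → ℝ}

theorem integral_sin_pow_even_mul_pos (hw : Continuous w) (hw_pos : ∀ x, 0 < w x) (n : ℕ) :
    0 < ∫ x in (0 : ℝ)..2 * π, sin x ^ (2 * n) * w x := by
  refine integral_pos two_pi_pos (by fun_prop : Continuous _).continuousOn
    (fun x _ => mul_nonneg ((even_two_mul n).pow_nonneg _) (hw_pos x).le) ⟨π / 2, ?_, ?_⟩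
  · constructor <;> linarith [pi_pos]
  · simpa using hw_pos (π / 2)

theorem integral_sin_pow_two_mul_add_two_lt (hw : Continuous w) (hw_pos : ∀ x, 0 < w x)
    (n : ℕ) :
    ∫ x in (0 : ℝ)..2 * π, sin x ^ (2 * n + 2) * w x
      < ∫ x in (0 : ℝ)..2 * π, sin x ^ (2 * n) * w x := by
  refine integral_lt_integral_of_continuousOn_of_le_of_exists_lt two_pi_pos
    (by fun_prop : Continuous _).continuousOn (by fun_prop : Continuous _).continuousOn
    (fun x _ => ?_) ⟨π / 4, ?_, ?_⟩
  · rw [pow_add]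
    gcongr
    · exact (hw_pos x).le
    · exact mul_le_of_le_one_right ((even_two_mul n).pow_nonneg _) (sin_sq_le_one x)
  · constructor <;> linarith [pi_pos]
  · have hsin : sin (π / 4) ^ 2 = 1 / 2 := by
      rw [sin_pi_div_four, div_pow, sq_sqrt zero_le_two]; norm_num
    have hpos : 0 < sin (π / 4) ^ (2 * n) * w (π / 4) :=
      mul_pos (pow_pos (by rw [sin_pi_div_four]; positivity) _) (hw_pos _)
    rw [pow_add, hsin]
    linarith

end Weighted

noncomputable def expCosMoment (c : ℝ) (n : ℕ) : ℝ :=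
  ∫ x in (0 : ℝ)..2 * π, sin x ^ n * exp (c * cos (2 * x))

namespace expCosMoment

variable (c : ℝ)

theorem hasDerivAt_sin_pow_mul_cos (m : ℕ) (x : ℝ) :
    HasDerivAt (fun x => sin x ^ (m + 1) * cos x * exp (c * cos (2 * x)))
      ((m + 1) * (sin x ^ m * exp (c * cos (2 * x)))
        - (m + 2 + 4 * c) * (sin x ^ (m + 2) * exp (c * cos (2 * x)))
        + 4 * c * (sin x ^ (m + 4) * exp (c * cos (2 * x)))) x := by
  have hexp : HasDerivAt (fun x => exp (c * cos (2 * x)))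
      (exp (c * cos (2 * x)) * (c * (-sin (2 * x) * 2))) x :=
    (((hasDerivAt_cos _).comp x ((hasDerivAt_id x).const_mul 2)).const_mul c).exp
      |>.congr_deriv (by simp)
  refine ((((hasDerivAt_sin x).fun_pow (m + 1)).fun_mul (hasDerivAt_cos x)).fun_mul hexp)
    |>.congr_deriv ?_
  rw [sin_two_mul, Nat.add_sub_cancel]
  push_cast
  linear_combination (exp (c * cos (2 * x)) * sin x ^ m * ((m + 1) - 4 * c * sin x ^ 2))
    * cos_sq_add_sin_sq x

theorem recurrence (m : ℕ) :
    (m + 1) * expCosMoment c m - (m + 2) * expCosMoment c (m + 2)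
      = 4 * c * (expCosMoment c (m + 2) - expCosMoment c (m + 4)) := by
  have hint : ∀ n : ℕ, IntervalIntegrable (fun x => sin x ^ n * exp (c * cos (2 * x)))
      volume 0 (2 * π) := fun n => by
    apply Continuous.intervalIntegrable; fun_prop
  have hFTC := integral_eq_sub_of_hasDerivAt (a := 0) (b := 2 * π)
    (fun x _ => hasDerivAt_sin_pow_mul_cos c m x) (by apply Continuous.intervalIntegrable; fun_prop)
  rw [integral_add (((hint _).const_mul _).sub ((hint _).const_mul _)) ((hint _).const_mul _),
    integral_sub ((hint _).const_mul _) ((hint _).const_mul _),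
    intervalIntegral.integral_const_mul, intervalIntegral.integral_const_mul,
    intervalIntegral.integral_const_mul] at hFTC
  simp only [sin_zero, sin_two_pi, ne_eq, Nat.add_eq_zero_iff, one_ne_zero, and_false,
    not_false_eq_true, zero_pow, zero_mul, sub_zero] at hFTC
  unfold expCosMoment
  linarith

theorem two_mul_pos (n : ℕ) : 0 < expCosMoment c (2 * n) :=
  integral_sin_pow_even_mul_pos (by fun_prop) (fun _ => exp_pos _) n

theorem two_mul_add_two_lt (n : ℕ) : expCosMoment c (2 * n + 2) < expCosMoment c (2 * n) :=
  integral_sin_pow_two_mul_add_two_lt (by fun_prop) (fun _ => exp_pos _) n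

variable {c}

theorem ratio_strictAnti (hc : c < 0) :
    StrictAnti fun k : ℕ =>
      expCosMoment c (2 * k + 2) / ((2 * (k : ℝ) + 1) * expCosMoment c (2 * k)) := by
  refine strictAnti_nat_of_succ_lt fun k => ?_
  have hA := two_mul_pos c k
  have hB : 0 < expCosMoment c (2 * k + 2) := two_mul_pos c (k + 1)
  have hCB : expCosMoment c (2 * k + 4) < expCosMoment c (2 * k + 2) :=
    two_mul_add_two_lt c (k + 1)
  have hrec := recurrence c (2 * k)
  set A := expCosMoment c (2 * k)
  set B := expCosMoment c (2 * k + 2)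
  set C := expCosMoment c (2 * k + 4)
  have hAB : (2 * k + 1) * A < (2 * k + 3) * B := by
    have : 4 * c * (B - C) < 0 := mul_neg_of_neg_of_pos (by linarith) (sub_pos.2 hCB)
    push_cast at hrec
    linarith
  change C / ((2 * ((k + 1 : ℕ) : ℝ) + 1) * B) < B / ((2 * k + 1) * A)
  rw [div_lt_div_iff₀ (by positivity) (by positivity)]
  calc C * ((2 * k + 1) * A) < B * ((2 * k + 1) * A) := by gcongr
    _ < B * ((2 * k + 3) * B) := by gcongr
    _ = B * ((2 * ((k + 1 : ℕ) : ℝ) + 1) * B) := by push_cast; ring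

end expCosMoment

/-- For every σ > 0, the sequence k ↦ Υ_k(σ) := s_{2k+2}/((2k+1)s_{2k}) − σ is strictly
decreasing in k. -/
theorem upsilon_strict_anti (σ : ℝ) (hσ : 0 < σ)
    (s : ℕ → ℝ)
    (hs : ∀ k : ℕ, s k =
      ∫ x in (0:ℝ)..(2 * π), (Real.sin x) ^ k * Real.exp (-(1 / σ) * Real.cos (2 * x))) :
    StrictAnti (fun k : ℕ => s (2 * k + 2) / ((2 * (k : ℝ) + 1) * s (2 * k)) - σ) := by
  obtain rfl : s = expCosMoment (-(1 / σ)) := funext hs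
  have hc : -(1 / σ) < 0 := neg_neg_of_pos (one_div_pos.mpr hσ)
  exact fun k l hkl => sub_lt_sub_right (expCosMoment.ratio_strictAnti hc hkl) σ
end

section
/- For all σ > 0, all M > 0 and all φ ∈ (0, π/2), the integral I(M,φ) := ∫_{0}^{2π} sin(x−φ) · exp(−(1/σ)(cos(2x) − M·cos(x−φ))) dx is strictly positive. -/
/-!
Substituting `x = y + φ` and using `2π`-periodicity, the integral becomes `∫₀^{2π} G` with
`G y = sin y · e^{-a cos(2y + 2φ)} · e^{b cos y}`, `a = 1/σ`, `b = M/σ`. Folding `[0, 2π]` onto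
`[0, π/2]` by `y ↦ y + π` and `y ↦ π - y` gives the integrand
`2 sin y · sinh (b cos y) · (e^{-a cos(2y + 2φ)} - e^{-a cos(2y - 2φ)})`, and each factor is
positive on `(0, π/2)` because `cos (2y + 2φ) < cos (2y - 2φ)` when `2y, 2φ ∈ (0, π)`.
-/

open Real MeasureTheory intervalIntegral

section Folding

variable {E : Type*} [NormedAddCommGroup E] [NormedSpace ℝ E] {f : ℝ → E}

theorem intervalIntegral.integral_eq_integral_add_comp_add_right {a p : ℝ}
    (h₁ : IntervalIntegrable f volume a (a + p))
    (h₂ : IntervalIntegrable f volume (a + p) (a + 2 * p)) :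
    ∫ x in a..a + 2 * p, f x = ∫ x in a..a + p, (f x + f (x + p)) := by
  have h₂' : IntervalIntegrable (fun x => f (x + p)) volume a (a + p) := by
    convert h₂.comp_add_right p using 1 <;> ring
  rw [integral_add h₁ h₂', integral_comp_add_right, ← integral_add_adjacent_intervals h₁ h₂]
  ring_nf

theorem intervalIntegral.integral_eq_integral_add_comp_sub_left {a b : ℝ}
    (h₁ : IntervalIntegrable f volume a b) (h₂ : IntervalIntegrable f volume b (2 * b - a)) :
    ∫ x in a..2 * b - a, f x = ∫ x in a..b, (f x + f (2 * b - x)) := by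
  have h₂' : IntervalIntegrable (fun x => f (2 * b - x)) volume a b := by
    convert (h₂.comp_sub_left (2 * b)).symm using 1 <;> ring
  rw [integral_add h₁ h₂', integral_comp_sub_left, ← integral_add_adjacent_intervals h₁ h₂]
  ring_nf

end Folding

theorem Real.cos_add_lt_cos_sub {x y : ℝ} (hx₀ : 0 < x) (hxπ : x < π) (hy₀ : 0 < y)
    (hyπ : y < π) : cos (x + y) < cos (x - y) := by
  rw [cos_add, cos_sub]
  linarith [mul_pos (sin_pos_of_pos_of_lt_pi hx₀ hxπ) (sin_pos_of_pos_of_lt_pi hy₀ hyπ)]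

noncomputable def shiftedIntegrand (a b φ y : ℝ) : ℝ :=
  sin y * exp (-a * cos (2 * y + 2 * φ)) * exp (b * cos y)

namespace shiftedIntegrand

theorem fold_pos {a b φ : ℝ} (ha : 0 < a) (hb : 0 < b) (hφ : φ ∈ Set.Ioo 0 (π / 2)) {y : ℝ}
    (hy : y ∈ Set.Ioo 0 (π / 2)) :
    0 < 2 * sin y * sinh (b * cos y) *
      (exp (-a * cos (2 * y + 2 * φ)) - exp (-a * cos (2 * y - 2 * φ))) := by
  obtain ⟨hy₀, hyπ⟩ := hy
  obtain ⟨hφ₀, hφπ⟩ := hφ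
  have hsin : 0 < sin y := sin_pos_of_pos_of_lt_pi hy₀ (by linarith [pi_pos])
  have hcos : 0 < cos y := cos_pos_of_mem_Ioo ⟨by linarith [pi_pos], hyπ⟩
  have hsinh : 0 < sinh (b * cos y) := sinh_pos_iff.mpr (mul_pos hb hcos)
  have hcos₂ : cos (2 * y + 2 * φ) < cos (2 * y - 2 * φ) :=
    cos_add_lt_cos_sub (by linarith) (by linarith) (by linarith) (by linarith)
  have hexp : exp (-a * cos (2 * y - 2 * φ)) < exp (-a * cos (2 * y + 2 * φ)) :=
    exp_lt_exp.mpr (by nlinarith)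
  exact mul_pos (mul_pos (mul_pos two_pos hsin) hsinh) (sub_pos.mpr hexp)

variable (a b φ : ℝ)

theorem continuous : Continuous (shiftedIntegrand a b φ) := by
  unfold shiftedIntegrand; fun_prop

theorem periodic : Function.Periodic (shiftedIntegrand a b φ) (2 * π) := by
  intro y
  simp only [shiftedIntegrand, sin_add_two_pi, cos_add_two_pi,
    show 2 * (y + 2 * π) + 2 * φ = 2 * y + 2 * φ + 2 * π + 2 * π by ring]

theorem add_comp_add_pi (y : ℝ) :
    shiftedIntegrand a b φ y + shiftedIntegrand a b φ (y + π) =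
      2 * sin y * sinh (b * cos y) * exp (-a * cos (2 * y + 2 * φ)) := by
  simp only [shiftedIntegrand, sin_add_pi, cos_add_pi, sinh_eq,
    show 2 * (y + π) + 2 * φ = 2 * y + 2 * φ + 2 * π by ring, cos_add_two_pi]
  ring_nf

theorem fold_eq (y : ℝ) :
    shiftedIntegrand a b φ y + shiftedIntegrand a b φ (y + π) +
        (shiftedIntegrand a b φ (π - y) + shiftedIntegrand a b φ (π - y + π)) =
      2 * sin y * sinh (b * cos y) *
        (exp (-a * cos (2 * y + 2 * φ)) - exp (-a * cos (2 * y - 2 * φ))) := by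
  rw [add_comp_add_pi, add_comp_add_pi, sin_pi_sub, cos_pi_sub, mul_neg, sinh_neg,
    show 2 * (π - y) + 2 * φ = 2 * π - (2 * y - 2 * φ) by ring, cos_two_pi_sub]
  ring

end shiftedIntegrand

/-- For all σ > 0, M > 0, φ ∈ (0, π/2), the integral
I(M,φ) := ∫₀^{2π} sin(x−φ) e^{−(1/σ)cos(2x)} e^{(M/σ)cos(x−φ)} dx is strictly positive. -/
theorem first_quadrant_integral_pos (σ M φ : ℝ) (hσ : 0 < σ) (hM : 0 < M)
    (hφ : φ ∈ Set.Ioo 0 (π / 2)) :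
    0 < ∫ x in (0:ℝ)..(2 * π),
      Real.sin (x - φ) * Real.exp (-(1 / σ) * Real.cos (2 * x))
        * Real.exp ((M / σ) * Real.cos (x - φ)) := by
  set G := shiftedIntegrand (1 / σ) (M / σ) φ
  have hG : Continuous G := shiftedIntegrand.continuous _ _ _
  have hshift : ∫ x in (0:ℝ)..(2 * π), Real.sin (x - φ) * Real.exp (-(1 / σ) * Real.cos (2 * x))
      * Real.exp ((M / σ) * Real.cos (x - φ)) = ∫ y in (0:ℝ)..(2 * π), G y := by
    have := (shiftedIntegrand.periodic (1 / σ) (M / σ) φ).intervalIntegral_add_eq (-φ) 0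
    rw [zero_add, neg_add_eq_sub] at this
    rw [← this, show -φ = 0 - φ by ring, ← integral_comp_sub_right G φ]
    refine integral_congr fun x _ => ?_
    simp only [G, shiftedIntegrand, show 2 * (x - φ) + 2 * φ = 2 * x by ring]
  have hfold : ∫ y in (0:ℝ)..(2 * π), G y =
      ∫ y in (0:ℝ)..(π / 2), (G y + G (y + π) + (G (π - y) + G (π - y + π))) := by
    have hπ := integral_eq_integral_add_comp_add_right (f := G) (a := 0) (p := π)
      (hG.intervalIntegrable _ _) (hG.intervalIntegrable _ _)
    have hπ₂ := integral_eq_integral_add_comp_sub_left (f := fun y => G y + G (y + π)) (a := 0)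
      (b := π / 2) (Continuous.intervalIntegrable (by fun_prop) _ _)
      (Continuous.intervalIntegrable (by fun_prop) _ _)
    simp only [zero_add, sub_zero, mul_div_cancel₀ π two_ne_zero] at hπ hπ₂
    rw [hπ, hπ₂]
  rw [hshift, hfold]
  refine intervalIntegral_pos_of_pos_on (Continuous.intervalIntegrable (by fun_prop) _ _)
    (fun y hy => ?_) (by positivity)
  rw [shiftedIntegrand.fold_eq]
  exact shiftedIntegrand.fold_pos (by positivity) (by positivity) hφ hy
end

section
/- If (m₁, m₂) ∈ ℝ² is a fixed point of the map g_σ and (m₁, m₂) ≠ (0,0), then m₁ = 0 or m₂ = 0. -/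
/-! Write `ρ = exp (-V / σ)` with `V x = cos 2x - m₁ cos x - m₂ sin x`. Since `ρ` is
`2π`-periodic, `∫ ρ' = 0`, i.e. `2 ∫ sin 2x ρ = m₁ ∫ sin x ρ - m₂ ∫ cos x ρ`, and at a fixed point
the right-hand side is `m₁ (Z m₂) - m₂ (Z m₁) = 0`. On the other hand, folding `[0, 2π]` onto
`[0, π/2]` by `x ↦ π - x, π + x, 2π - x` turns `sin 2x ρ` into
`4 sin 2x exp (-cos 2x / σ) sinh (m₁ cos x / σ) sinh (m₂ sin x / σ)`, whose product with `m₁ m₂`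
is positive on `(0, π/2)` unless `m₁ m₂ = 0`. -/

open Real MeasureTheory intervalIntegral

/-- `exp (-β V)` for the potential `V x = cos 2x - a cos x - b sin x`; with `β = 1 / σ` it is the
integrand of `Z_σ` and `g_σ`. -/
noncomputable def gibbsDensity (β a b x : ℝ) : ℝ := exp (-β * (cos (2 * x) - a * cos x - b * sin x))

@[fun_prop]
lemma continuous_gibbsDensity (β a b : ℝ) : Continuous (gibbsDensity β a b) := by
  unfold gibbsDensity
  fun_prop

lemma gibbsDensity_periodic (β a b : ℝ) : Function.Periodic (gibbsDensity β a b) (2 * π) := by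
  intro x
  simp only [gibbsDensity, cos_two_mul, cos_add_two_pi, sin_add_two_pi]

lemma gibbsDensity_eq_mul (β a b x : ℝ) :
    gibbsDensity β a b x = exp (-β * cos (2 * x)) * exp (β * a * cos x) * exp (β * b * sin x) := by
  rw [gibbsDensity, ← exp_add, ← exp_add]
  ring_nf

lemma hasDerivAt_gibbsDensity (β a b x : ℝ) :
    HasDerivAt (gibbsDensity β a b)
      (β * ((2 * sin (2 * x) - a * sin x + b * cos x) * gibbsDensity β a b x)) x := by
  have hV : HasDerivAt (fun y => cos (2 * y) - a * cos y - b * sin y)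
      (-sin (2 * x) * 2 - a * -sin x - b * cos x) x :=
    ((((hasDerivAt_id x).const_mul 2).cos.congr_deriv (by simp)).sub
      ((hasDerivAt_cos x).const_mul a)).sub ((hasDerivAt_sin x).const_mul b)
  refine (hV.const_mul (-β)).exp.congr_deriv ?_
  simp only [gibbsDensity]
  ring

lemma integral_gibbsDensity_pos (β a b : ℝ) : 0 < ∫ x in 0..2 * π, gibbsDensity β a b x :=
  intervalIntegral_pos_of_pos_on ((continuous_gibbsDensity β a b).intervalIntegrable _ _)
    (fun _ _ => exp_pos _) (by positivity)

lemma integral_deriv_potential_mul_gibbsDensity_eq_zero {β : ℝ} (hβ : β ≠ 0) (a b : ℝ) :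
    ∫ x in 0..2 * π, (2 * sin (2 * x) - a * sin x + b * cos x) * gibbsDensity β a b x = 0 := by
  have hFTC := integral_eq_sub_of_hasDerivAt (fun x _ => hasDerivAt_gibbsDensity β a b x)
    (a := 0) (b := 2 * π) (by apply Continuous.intervalIntegrable; fun_prop)
  rw [(gibbsDensity_periodic β a b).eq, sub_self, intervalIntegral.integral_const_mul] at hFTC
  exact (mul_eq_zero.1 hFTC).resolve_left hβ

lemma two_mul_integral_sin_two_mul_gibbsDensity {β : ℝ} (hβ : β ≠ 0) (a b : ℝ) :
    2 * ∫ x in 0..2 * π, sin (2 * x) * gibbsDensity β a b x =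
      a * (∫ x in 0..2 * π, sin x * gibbsDensity β a b x)
        - b * ∫ x in 0..2 * π, cos x * gibbsDensity β a b x := by
  have h := integral_deriv_potential_mul_gibbsDensity_eq_zero hβ a b
  simp only [add_mul, sub_mul, mul_assoc] at h
  rw [intervalIntegral.integral_add, intervalIntegral.integral_sub,
    intervalIntegral.integral_const_mul, intervalIntegral.integral_const_mul,
    intervalIntegral.integral_const_mul] at h
  · linarith
  all_goals apply Continuous.intervalIntegrable; fun_prop

lemma integral_zero_two_pi_eq_integral_folded {f : ℝ → ℝ} (hf : Continuous f) :
    ∫ x in 0..2 * π, f x =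
      ∫ x in 0..π / 2, (f x + f (π - x) + f (π + x) + f (2 * π - x)) := by
  have hi : ∀ c d : ℝ, IntervalIntegrable f volume c d := fun _ _ => hf.intervalIntegrable _ _
  have hi' : ∀ g : ℝ → ℝ, Continuous g → IntervalIntegrable (fun x => f (g x)) volume 0 (π / 2) :=
    fun g hg => (hf.comp hg).intervalIntegrable _ _
  rw [intervalIntegral.integral_add (((hi _ _).add (hi' _ (by fun_prop))).add (hi' _ (by fun_prop)))
      (hi' _ (by fun_prop)),
    intervalIntegral.integral_add ((hi _ _).add (hi' _ (by fun_prop))) (hi' _ (by fun_prop)),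
    intervalIntegral.integral_add (hi _ _) (hi' _ (by fun_prop)),
    integral_comp_sub_left, integral_comp_add_left, integral_comp_sub_left]
  rw [← integral_add_adjacent_intervals (hi 0 (π / 2)) (hi (π / 2) (2 * π)),
    ← integral_add_adjacent_intervals (hi (π / 2) π) (hi π (2 * π)),
    ← integral_add_adjacent_intervals (hi π (3 * π / 2)) (hi (3 * π / 2) (2 * π))]
  ring_nf

lemma sin_two_mul_gibbsDensity_folded_eq (β a b x : ℝ) :
    sin (2 * x) * gibbsDensity β a b x + sin (2 * (π - x)) * gibbsDensity β a b (π - x)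
      + sin (2 * (π + x)) * gibbsDensity β a b (π + x)
      + sin (2 * (2 * π - x)) * gibbsDensity β a b (2 * π - x)
      = 4 * sin (2 * x) * exp (-β * cos (2 * x)) * sinh (β * a * cos x) * sinh (β * b * sin x) := by
  have hcos : cos (π + x) = -cos x := by rw [add_comm, cos_add_pi]
  have hsin : sin (π + x) = -sin x := by rw [add_comm, sin_add_pi]
  simp only [gibbsDensity_eq_mul, sin_two_mul, cos_two_mul, cos_pi_sub, sin_pi_sub, hcos, hsin,
    cos_two_pi_sub, sin_two_pi_sub, neg_sq, mul_neg, sinh_eq]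
  ring

lemma mul_sinh_self_pos {x : ℝ} (hx : x ≠ 0) : 0 < x * sinh x := by
  rcases hx.lt_or_gt with hneg | hpos
  · exact mul_pos_of_neg_of_neg hneg (sinh_neg_iff.2 hneg)
  · exact mul_pos hpos (sinh_pos_iff.2 hpos)

lemma mul_mul_sinh_mul_sinh_pos {β a b c s : ℝ} (hβ : β ≠ 0) (ha : a ≠ 0) (hb : b ≠ 0)
    (hc : 0 < c) (hs : 0 < s) : 0 < a * b * (sinh (β * a * c) * sinh (β * b * s)) := by
  have hA := mul_sinh_self_pos (mul_ne_zero (mul_ne_zero hβ ha) hc.ne')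
  have hB := mul_sinh_self_pos (mul_ne_zero (mul_ne_zero hβ hb) hs.ne')
  have hprod : 0 < (β ^ 2 * c * s) * (a * b * (sinh (β * a * c) * sinh (β * b * s))) :=
    (mul_pos hA hB).trans_eq (by ring)
  exact (mul_pos_iff_of_pos_left (by positivity)).1 hprod

lemma mul_integral_sin_two_mul_gibbsDensity_pos {β a b : ℝ} (hβ : β ≠ 0) (ha : a ≠ 0)
    (hb : b ≠ 0) : 0 < a * b * ∫ x in 0..2 * π, sin (2 * x) * gibbsDensity β a b x := by
  rw [integral_zero_two_pi_eq_integral_folded (by fun_prop),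
    ← intervalIntegral.integral_const_mul]
  refine intervalIntegral_pos_of_pos_on (by apply Continuous.intervalIntegrable; fun_prop)
    (fun x ⟨hx0, hx1⟩ => ?_) (by positivity)
  have hcos : 0 < cos x := cos_pos_of_mem_Ioo ⟨by linarith [pi_pos], hx1⟩
  have hsin : 0 < sin x := sin_pos_of_pos_of_lt_pi hx0 (by linarith [pi_pos])
  have hsin2 : 0 < sin (2 * x) := by rw [sin_two_mul]; positivity
  rw [sin_two_mul_gibbsDensity_folded_eq]
  calc 0 < 4 * sin (2 * x) * exp (-β * cos (2 * x)) *
        (a * b * (sinh (β * a * cos x) * sinh (β * b * sin x))) :=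
      mul_pos (by positivity) (mul_mul_sinh_mul_sinh_pos hβ ha hb hcos hsin)
    _ = _ := by ring

theorem fixed_points_on_axes_general (σ : ℝ) (hσ : 0 < σ)
    (Z : ℝ × ℝ → ℝ)
    (hZ : ∀ m : ℝ × ℝ, Z m = ∫ x in (0:ℝ)..(2 * π),
      Real.exp (-(1 / σ) * (Real.cos (2 * x) - m.1 * Real.cos x - m.2 * Real.sin x)))
    (g : ℝ × ℝ → ℝ × ℝ)
    (hg : ∀ m : ℝ × ℝ, g m =
      ((Z m)⁻¹ * ∫ x in (0:ℝ)..(2 * π), Real.cos x *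
          Real.exp (-(1 / σ) * (Real.cos (2 * x) - m.1 * Real.cos x - m.2 * Real.sin x)),
       (Z m)⁻¹ * ∫ x in (0:ℝ)..(2 * π), Real.sin x *
          Real.exp (-(1 / σ) * (Real.cos (2 * x) - m.1 * Real.cos x - m.2 * Real.sin x))))
    (m : ℝ × ℝ) (hfix : g m = m) :
    m.1 = 0 ∨ m.2 = 0 := by
  by_contra! hm
  have hβ : 1 / σ ≠ 0 := one_div_ne_zero hσ.ne'
  have hZm : Z m ≠ 0 := (hZ m).trans_ne (integral_gibbsDensity_pos (1 / σ) m.1 m.2).ne'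
  obtain ⟨hcos, hsin⟩ := Prod.ext_iff.1 ((hg m).symm.trans hfix)
  have hcos' : ∫ x in 0..2 * π, cos x * gibbsDensity (1 / σ) m.1 m.2 x = Z m * m.1 :=
    (inv_mul_eq_iff_eq_mul₀ hZm).1 hcos
  have hsin' : ∫ x in 0..2 * π, sin x * gibbsDensity (1 / σ) m.1 m.2 x = Z m * m.2 :=
    (inv_mul_eq_iff_eq_mul₀ hZm).1 hsin
  have hvanish : ∫ x in 0..2 * π, sin (2 * x) * gibbsDensity (1 / σ) m.1 m.2 x = 0 := by
    have h := two_mul_integral_sin_two_mul_gibbsDensity hβ m.1 m.2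
    rw [hcos', hsin'] at h
    linarith
  have hpos := mul_integral_sin_two_mul_gibbsDensity_pos hβ hm.1 hm.2
  rw [hvanish, mul_zero] at hpos
  exact lt_irrefl 0 hpos

/-- Any fixed point of g_σ other than (0,0) lies on one of the coordinate axes. -/
theorem fixed_points_on_axes (σ : ℝ) (hσ : 0 < σ)
    (Z : ℝ × ℝ → ℝ)
    (hZ : ∀ m : ℝ × ℝ, Z m = ∫ x in (0:ℝ)..(2 * π),
      Real.exp (-(1 / σ) * (Real.cos (2 * x) - m.1 * Real.cos x - m.2 * Real.sin x)))
    (g : ℝ × ℝ → ℝ × ℝ)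
    (hg : ∀ m : ℝ × ℝ, g m =
      ((Z m)⁻¹ * ∫ x in (0:ℝ)..(2 * π), Real.cos x *
          Real.exp (-(1 / σ) * (Real.cos (2 * x) - m.1 * Real.cos x - m.2 * Real.sin x)),
       (Z m)⁻¹ * ∫ x in (0:ℝ)..(2 * π), Real.sin x *
          Real.exp (-(1 / σ) * (Real.cos (2 * x) - m.1 * Real.cos x - m.2 * Real.sin x))))
    (m : ℝ × ℝ) (hfix : g m = m) (hne : m ≠ (0, 0)) :
    m.1 = 0 ∨ m.2 = 0 :=
  fixed_points_on_axes_general σ hσ Z hZ g hg m hfix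
end

section
/- For every σ > 0, the function ζ_σ(m) := ∫_{0}^{2π} (sin x − m)·exp(−(1/σ)cos(2x) + (m/σ)·sin x) dx admits the series expansion ζ_σ(m) = Σ_{k≥0} (1/(2k)!) · (m/σ)^{2k+1} · s_{2k} · (s_{2k+2}/((2k+1)·s_{2k}) − σ), valid for all m ∈ ℝ. -/
open Real MeasureTheory intervalIntegral

/-!
Expanding `exp ((m/σ) sin x)` as a power series and integrating termwise (the series of
absolute values is an integrable majorant) writes `ζ_σ(m)` as `∑ₙ (m/σ)ⁿ/n! (s_{n+1} - m sₙ)`. The weight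
`exp (-(1/σ) cos 2x)` is invariant under `x ↦ 2π - x` while `sin` changes sign, so the odd
moments vanish; grouping the terms `n = 2k, 2k + 1` gives the stated series, where dividing by
`s_{2k}` is harmless because the even moments are positive.
-/

theorem HasSum.add_even_odd {G : Type*} [AddCommGroup G] [UniformSpace G] [IsUniformAddGroup G]
    [CompleteSpace G] [T2Space G] {f : ℕ → G} {a : G} (hf : HasSum f a) :
    HasSum (fun k ↦ f (2 * k) + f (2 * k + 1)) a := by
  have he := (hf.summable.comp_injective (mul_right_injective₀ two_ne_zero)).hasSum
  have ho := (hf.summable.comp_injective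
    ((add_left_injective 1).comp (mul_right_injective₀ two_ne_zero))).hasSum
  rw [hf.unique (he.even_add_odd ho)]
  exact he.add ho

theorem intervalIntegral.integral_eq_zero_of_reflect_eq_neg {E : Type*} [NormedAddCommGroup E]
    [NormedSpace ℝ E] {f : ℝ → E} {a b : ℝ} (hf : ∀ x, f (a + b - x) = -f x) :
    ∫ x in a..b, f x = 0 := by
  have h := integral_comp_sub_left (a := a) (b := b) f (a + b)
  simp only [hf, integral_neg, add_sub_cancel_right, add_sub_cancel_left] at h
  have htwice : (2 : ℝ) • ∫ x in a..b, f x = 0 := by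
    rw [two_smul]; nth_rewrite 1 [← h]; exact neg_add_cancel _
  exact (smul_eq_zero.mp htwice).resolve_left two_ne_zero

theorem hasSum_intervalIntegral_mul_exp {g h : ℝ → ℝ} (hg : Continuous g) (hh : Continuous h)
    (a b : ℝ) :
    HasSum (fun n : ℕ ↦ ∫ x in a..b, g x * (h x ^ n / n.factorial))
      (∫ x in a..b, g x * exp (h x)) := by
  have hexp (y : ℝ) : HasSum (fun n : ℕ ↦ y ^ n / n.factorial) (exp y) := by
    rw [exp_eq_exp_ℝ]; exact NormedSpace.expSeries_div_hasSum_exp y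
  have hbound_tsum : (fun x ↦ ∑' n : ℕ, |g x| * (|h x| ^ n / n.factorial))
      = fun x ↦ |g x| * exp |h x| := funext fun x ↦ ((hexp _).mul_left _).tsum_eq
  refine hasSum_integral_of_dominated_convergence (fun n x ↦ |g x| * (|h x| ^ n / n.factorial))
    (fun n ↦ (by fun_prop : Continuous _).aestronglyMeasurable)
    (fun n ↦ ae_of_all _ fun x _ ↦ le_of_eq ?_)
    (ae_of_all _ fun x _ ↦ ((hexp _).mul_left _).summable)
    ?_ (ae_of_all _ fun x _ ↦ (hexp _).mul_left _)
  · simp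
  · rw [hbound_tsum]
    exact (by fun_prop : Continuous _).intervalIntegrable _ _

noncomputable def sinMoment (w : ℝ → ℝ) (n : ℕ) : ℝ :=
  ∫ x in 0..2 * π, sin x ^ n * w x

theorem sinMoment_odd_eq_zero {w : ℝ → ℝ} (hw : ∀ x, w (2 * π - x) = w x) (k : ℕ) :
    sinMoment w (2 * k + 1) = 0 :=
  integral_eq_zero_of_reflect_eq_neg fun x ↦ by
    rw [zero_add, sin_two_pi_sub, hw, Odd.neg_pow ⟨k, rfl⟩, neg_mul]

theorem sinMoment_even_pos {w : ℝ → ℝ} (hw : Continuous w) (hpos : ∀ x, 0 < w x) (k : ℕ) :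
    0 < sinMoment w (2 * k) := by
  have hc : Continuous fun x ↦ sin x ^ (2 * k) * w x := by fun_prop
  have hfirst : 0 < ∫ x in 0..π, sin x ^ (2 * k) * w x :=
    intervalIntegral_pos_of_pos_on (hc.intervalIntegrable _ _)
      (fun x hx ↦ mul_pos (pow_pos (sin_pos_of_pos_of_lt_pi hx.1 hx.2) _) (hpos x)) pi_pos
  have hsecond : 0 ≤ ∫ x in π..2 * π, sin x ^ (2 * k) * w x :=
    integral_nonneg (by linarith [pi_pos])
      fun x _ ↦ mul_nonneg ((even_two_mul k).pow_nonneg _) (hpos x).le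
  rw [sinMoment, ← integral_add_adjacent_intervals (hc.intervalIntegrable 0 π)
    (hc.intervalIntegrable π (2 * π))]
  exact add_pos_of_pos_of_nonneg hfirst hsecond

theorem hasSum_sinMoment {w : ℝ → ℝ} (hw : Continuous w) (c m : ℝ) :
    HasSum (fun n : ℕ ↦ c ^ n / n.factorial * (sinMoment w (n + 1) - m * sinMoment w n))
      (∫ x in 0..2 * π, (sin x - m) * w x * exp (c * sin x)) := by
  have hterm (n : ℕ) : ∫ x in 0..2 * π, (sin x - m) * w x * ((c * sin x) ^ n / n.factorial)
      = c ^ n / n.factorial * (sinMoment w (n + 1) - m * sinMoment w n) := by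
    have hc (n : ℕ) : Continuous fun x ↦ sin x ^ n * w x := by fun_prop
    rw [sinMoment, sinMoment, ← intervalIntegral.integral_const_mul, ← integral_sub
      ((hc _).intervalIntegrable _ _) (((hc _).intervalIntegrable _ _).const_mul m),
      ← intervalIntegral.integral_const_mul]
    congr 1 with x
    ring
  simpa only [hterm] using
    hasSum_intervalIntegral_mul_exp (g := fun x ↦ (sin x - m) * w x) (h := fun x ↦ c * sin x)
      (by fun_prop) (by fun_prop) 0 (2 * π)

/-- Series expansion of ζ_σ:
ζ_σ(m) = Σ_{k≥0} (1/(2k)!) (m/σ)^{2k+1} s_{2k} (s_{2k+2}/((2k+1)s_{2k}) − σ). -/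
theorem zeta_series_expansion (σ : ℝ) (hσ : 0 < σ)
    (s : ℕ → ℝ)
    (hs : ∀ k : ℕ, s k =
      ∫ x in (0:ℝ)..(2 * π), (Real.sin x) ^ k * Real.exp (-(1 / σ) * Real.cos (2 * x)))
    (ζ : ℝ → ℝ)
    (hζ : ∀ m : ℝ, ζ m = ∫ x in (0:ℝ)..(2 * π),
      (Real.sin x - m) * Real.exp (-(1 / σ) * Real.cos (2 * x) + (m / σ) * Real.sin x))
    (m : ℝ) :
    ζ m = ∑' k : ℕ, (1 / ((2 * k).factorial : ℝ)) * (m / σ) ^ (2 * k + 1) * s (2 * k)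
      * (s (2 * k + 2) / ((2 * (k : ℝ) + 1) * s (2 * k)) - σ) := by
  set w : ℝ → ℝ := fun x ↦ exp (-(1 / σ) * cos (2 * x))
  obtain rfl : s = sinMoment w := funext hs
  have hw_cont : Continuous w := by fun_prop
  have hw_reflect (x : ℝ) : w (2 * π - x) = w x := by
    have : 2 * (2 * π - x) = -(2 * x) + (2 : ℕ) * (2 * π) := by push_cast; ring
    simp only [w, this, cos_add_nat_mul_two_pi, cos_neg]
  have hζm : ζ m = ∫ x in 0..2 * π, (sin x - m) * w x * exp (m / σ * sin x) := by
    simp only [hζ, w, exp_add, mul_assoc]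
  rw [hζm, ← (hasSum_sinMoment hw_cont (m / σ) m).add_even_odd.tsum_eq]
  refine tsum_congr fun k ↦ ?_
  have hσ_ne := hσ.ne'
  have hM_pos := sinMoment_even_pos hw_cont (fun x ↦ exp_pos _) k
  rw [sinMoment_odd_eq_zero hw_reflect, Nat.factorial_succ, pow_succ]
  push_cast
  field_simp
  ring
end

section
/- For each σ > 0, the derivative at zero of ζ_σ satisfies ζ_σ'(0) = (1/σ)·(s₂ − σ·s₀), where s₀ = ∫_{0}^{2π} e^{−(1/σ)cos(2x)} dx and s₂ = ∫_{0}^{2π} sin²x · e^{−(1/σ)cos(2x)} dx. Consequently, for σ > 1 one has ζ_σ'(0) < 0. -/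
open Real MeasureTheory intervalIntegral

/-!
Differentiate under the integral sign: the `m`-derivative of the integrand,
`((sin x - m) sin x / σ - 1) e^{-cos(2x)/σ + m sin x / σ}`, is jointly continuous and hence
bounded on compact sets. At `m = 0` it integrates to `s₂ / σ - s₀`, which is negative for
`σ > 1` because `s₂ ≤ s₀` and `s₀ > 0`.
-/

theorem hasDerivAt_intervalIntegral_of_continuous_deriv {E : Type*} [NormedAddCommGroup E]
    [NormedSpace ℝ E] {μ : Measure ℝ} [IsLocallyFiniteMeasure μ] {F F' : ℝ → ℝ → E}
    {a b m₀ : ℝ} (hF : ∀ m, Continuous (F m)) (hF' : Continuous (Function.uncurry F'))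
    (hderiv : ∀ m x, HasDerivAt (F · x) (F' m x) m) :
    HasDerivAt (fun m => ∫ x in a..b, F m x ∂μ) (∫ x in a..b, F' m₀ x ∂μ) m₀ := by
  obtain ⟨C, hC⟩ := ((isCompact_closedBall m₀ 1).prod (isCompact_uIcc (a := a) (b := b)))
    |>.exists_bound_of_continuousOn hF'.continuousOn
  refine (intervalIntegral.hasDerivAt_integral_of_dominated_loc_of_deriv_le (bound := fun _ => C)
    (Metric.closedBall_mem_nhds m₀ one_pos) (.of_forall fun m => (hF m).aestronglyMeasurable)
    ((hF m₀).intervalIntegrable a b) (hF'.uncurry_left m₀).aestronglyMeasurable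
    (.of_forall fun x hx m hm => hC (m, x) ⟨hm, Set.uIoc_subset_uIcc hx⟩)
    intervalIntegrable_const
    (.of_forall fun x _ m _ => hderiv m x)).2

theorem hasDerivAt_sub_mul_exp (s c σ m : ℝ) :
    HasDerivAt (fun m => (s - m) * exp (c + m / σ * s))
      (((s - m) * (s / σ) - 1) * exp (c + m / σ * s)) m := by
  have hlin : HasDerivAt (fun m => c + m / σ * s) (s / σ) m := by
    simpa [div_mul_eq_mul_div] using (((hasDerivAt_id m).mul_const s).div_const σ).const_add c
  exact (((hasDerivAt_id' m).const_sub s).fun_mul hlin.exp).congr_deriv (by ring)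

/-- ζ_σ'(0) = (1/σ)(s₂ − σ s₀); consequently ζ_σ'(0) < 0 for σ > 1. -/
theorem zeta_deriv_at_zero (σ : ℝ) (hσ : 0 < σ)
    (ζ : ℝ → ℝ)
    (hζ : ∀ m : ℝ, ζ m = ∫ x in (0:ℝ)..(2 * π),
      (Real.sin x - m) * Real.exp (-(1 / σ) * Real.cos (2 * x) + (m / σ) * Real.sin x))
    (s₀ s₂ : ℝ)
    (hs₀ : s₀ = ∫ x in (0:ℝ)..(2 * π), Real.exp (-(1 / σ) * Real.cos (2 * x)))
    (hs₂ : s₂ = ∫ x in (0:ℝ)..(2 * π),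
      (Real.sin x) ^ 2 * Real.exp (-(1 / σ) * Real.cos (2 * x))) :
    deriv ζ 0 = (1 / σ) * (s₂ - σ * s₀) ∧ (1 < σ → deriv ζ 0 < 0) := by
  have hw_cont : Continuous fun x => exp (-(1 / σ) * cos (2 * x)) := by fun_prop
  have hderiv : HasDerivAt ζ (∫ x in (0:ℝ)..(2 * π),
      ((sin x - 0) * (sin x / σ) - 1) * exp (-(1 / σ) * cos (2 * x) + 0 / σ * sin x)) 0 := by
    rw [show ζ = _ from funext hζ]
    exact hasDerivAt_intervalIntegral_of_continuous_deriv (fun m => by fun_prop) (by fun_prop)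
      fun m x => hasDerivAt_sub_mul_exp _ _ _ _
  have hs : deriv ζ 0 = (1 / σ) * s₂ - s₀ := by
    rw [hderiv.deriv, hs₀, hs₂, ← intervalIntegral.integral_const_mul,
      ← intervalIntegral.integral_sub]
    · congr 1; ext x; simp only [sub_zero, zero_div, zero_mul, add_zero]; ring
    all_goals exact Continuous.intervalIntegrable (by fun_prop) _ _
  have hs₀_pos : 0 < s₀ := by
    rw [hs₀]
    exact intervalIntegral_pos_of_pos_on (hw_cont.intervalIntegrable _ _)
      (fun x _ => exp_pos _) two_pi_pos
  have hs₂_le : s₂ ≤ s₀ := by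
    rw [hs₀, hs₂]
    refine integral_mono_on two_pi_pos.le (Continuous.intervalIntegrable (by fun_prop) _ _)
      (hw_cont.intervalIntegrable _ _) fun x _ => ?_
    exact mul_le_of_le_one_left (exp_pos _).le (sin_sq_le_one x)
  refine ⟨by rw [hs]; field_simp, fun hσ₁ => ?_⟩
  rw [hs, sub_neg, one_div_mul_eq_div, div_lt_iff₀ hσ]
  nlinarith
end

section
/- For each σ ≥ 1/2, c₂ − σ·c₀ < 0, where c₀ := ∫_{0}^{2π} e^{−(1/σ)cos(2x)} dx and c₂ := ∫_{0}^{2π} cos²x · e^{−(1/σ)cos(2x)} dx. -/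
/-!
Since `cos x ^ 2 = (1 + cos (2 x)) / 2`, writing `t = cos (2 x)` and `a = 1 / σ` gives
`c₂ - σ c₀ = (1/2 - σ) c₀ + (1/2) ∫ t e^{-a t}`. The first term is `≤ 0`. For the second,
`∫ t = 0` over a period, so `∫ t e^{-a t} = ∫ t (e^{-a t} - 1)`, whose integrand is `≤ 0`
everywhere and `< 0` wherever `t ≠ 0`.
-/

open Real MeasureTheory intervalIntegral

lemma mul_exp_neg_mul_sub_one_nonpos {a : ℝ} (ha : 0 ≤ a) (t : ℝ) :
    t * (exp (-a * t) - 1) ≤ 0 := by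
  rcases le_total 0 t with ht | ht
  · exact mul_nonpos_of_nonneg_of_nonpos ht
      (sub_nonpos.2 (exp_le_one_iff.2 (by nlinarith : -a * t ≤ 0)))
  · exact mul_nonpos_of_nonpos_of_nonneg ht
      (sub_nonneg.2 (one_le_exp_iff.2 (by nlinarith : 0 ≤ -a * t)))

lemma mul_exp_neg_mul_sub_one_neg {a t : ℝ} (ha : 0 < a) (ht : t ≠ 0) :
    t * (exp (-a * t) - 1) < 0 := by
  rcases ht.lt_or_gt with ht | ht
  · exact mul_neg_of_neg_of_pos ht
      (sub_pos.2 (one_lt_exp_iff.2 (by nlinarith : 0 < -a * t)))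
  · exact mul_neg_of_pos_of_neg ht
      (sub_neg.2 (exp_lt_one_iff.2 (by nlinarith : -a * t < 0)))

lemma integral_mul_exp_neg_mul_neg {f : ℝ → ℝ} {a lo hi : ℝ} (ha : 0 < a) (hlohi : lo < hi)
    (hf : ContinuousOn f (Set.Icc lo hi)) (hf_mean : ∫ x in lo..hi, f x = 0)
    (hf_ne : ∃ c ∈ Set.Icc lo hi, f c ≠ 0) :
    ∫ x in lo..hi, f x * exp (-a * f x) < 0 := by
  have hexp : ContinuousOn (fun x ↦ exp (-a * f x)) (Set.Icc lo hi) :=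
    continuous_exp.comp_continuousOn (hf.const_smul (-a))
  have hsub_mean : ∫ x in lo..hi, f x * exp (-a * f x)
      = ∫ x in lo..hi, f x * (exp (-a * f x) - 1) := by
    simp only [mul_sub, mul_one]
    have hint : IntervalIntegrable (fun x ↦ f x * exp (-a * f x)) volume lo hi :=
      (hf.mul hexp).intervalIntegrable_of_Icc hlohi.le
    rw [integral_sub hint (hf.intervalIntegrable_of_Icc hlohi.le), hf_mean, sub_zero]
  rw [hsub_mean, ← integral_zero (a := lo) (b := hi)]
  obtain ⟨c, hc, hfc⟩ := hf_ne
  exact integral_lt_integral_of_continuousOn_of_le_of_exists_lt hlohi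
    (hf.mul (hexp.sub continuousOn_const)) continuousOn_const
    (fun x _ ↦ mul_exp_neg_mul_sub_one_nonpos ha.le _) ⟨c, hc, mul_exp_neg_mul_sub_one_neg ha hfc⟩

lemma integral_cos_two_mul_mul_exp_neg_mul_neg {a : ℝ} (ha : 0 < a) :
    ∫ x in (0:ℝ)..(2 * π), cos (2 * x) * exp (-a * cos (2 * x)) < 0 := by
  refine integral_mul_exp_neg_mul_neg ha two_pi_pos (by fun_prop) ?_
    ⟨0, ⟨le_rfl, two_pi_pos.le⟩, by simp⟩
  rw [intervalIntegral.integral_comp_mul_left (fun x ↦ cos x) two_ne_zero, integral_cos]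
  simpa [show 2 * (2 * π) = ((4 : ℕ) : ℝ) * π by push_cast; ring] using sin_nat_mul_pi 4

/-- For σ ≥ 1/2, c₂ − σ c₀ < 0 where c_k = ∫₀^{2π} (cos x)^k e^{−(1/σ)cos(2x)} dx. -/
theorem c2_minus_sigma_c0_neg (σ : ℝ) (hσ : 1 / 2 ≤ σ) :
    (∫ x in (0:ℝ)..(2 * π), (Real.cos x) ^ 2 * Real.exp (-(1 / σ) * Real.cos (2 * x)))
      - σ * ∫ x in (0:ℝ)..(2 * π), Real.exp (-(1 / σ) * Real.cos (2 * x)) < 0 := by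
  set a := 1 / σ
  have ha : 0 < a := by positivity
  set c₀ := ∫ x in (0:ℝ)..(2 * π), exp (-a * cos (2 * x))
  set J := ∫ x in (0:ℝ)..(2 * π), cos (2 * x) * exp (-a * cos (2 * x))
  have hc₂ : ∫ x in (0:ℝ)..(2 * π), cos x ^ 2 * exp (-a * cos (2 * x)) = c₀ / 2 + J / 2 := by
    simp only [cos_sq, add_mul, div_mul_eq_mul_div, one_mul]
    rw [intervalIntegral.integral_add (Continuous.intervalIntegrable (by fun_prop) _ _)
      (Continuous.intervalIntegrable (by fun_prop) _ _), intervalIntegral.integral_div,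
      intervalIntegral.integral_div]
  have hc₀ : 0 ≤ c₀ := integral_nonneg two_pi_pos.le fun x _ ↦ (exp_pos _).le
  have hJ : J < 0 := integral_cos_two_mul_mul_exp_neg_mul_neg ha
  rw [hc₂]
  nlinarith [mul_nonneg (sub_nonneg.2 hσ) hc₀]
end
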